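/- arXiv:2105.08546 — 4 statements merged into one kernel-verified Lean document; each statement's English description precedes it below -/
import Mathlib

section
/- For m ≥ 2, i ≥ 0 and j − i ≥ 2, the Schur functions satisfy s_{(1^{i+1})} · s_{(m,1^{j-1})} − s_{(1^i)} · s_{(m,1^j)} = s_{(m+1,2^i,1^{j-i-1})} + s_{(m,2^{i+1},1^{j-i-2})}. -/
open MvPolynomial Finset

noncomputable section

/-- The ring of symmetric functions, as the free polynomial ring generated by the
complete homogeneous symmetric functions `h₁, h₂, …` (variable `n` is `h_{n+1}`). -/
abbrev SymF := MvPolynomial ℕ ℤ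

/-- The complete homogeneous symmetric function `h_n`, with `h_n = 0` for `n < 0`. -/
def hh : ℤ → SymF
  | Int.ofNat 0 => 1
  | Int.ofNat (n+1) => X n
  | Int.negSucc _ => 0

/-- The Schur function `s_λ` for `λ = (lam 0, lam 1, …, lam (l-1))`, defined by the
Jacobi–Trudi determinant `det (h_{λ_i - i + j})₁≤i,j≤l`. -/
def schur (l : ℕ) (lam : Fin l → ℕ) : SymF :=
  Matrix.det (Matrix.of fun i j : Fin l => hh ((lam i : ℤ) + (j : ℤ) - (i : ℤ)))

/-- The elementary symmetric function `e_n = s_{(1^n)}`. -/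
def ee (n : ℕ) : SymF := schur n (fun _ => 1)

/-- The skew Schur function `s_{λ/μ}`, via the Jacobi–Trudi determinant
`det (h_{λ_i - μ_j - i + j})`. -/
def skewSchur (l : ℕ) (lam mu : Fin l → ℕ) : SymF :=
  Matrix.det (Matrix.of fun i j : Fin l =>
    hh ((lam i : ℤ) - (mu j : ℤ) + (j : ℤ) - (i : ℤ)))

/-! ### Auxiliary lemmas -/

lemma hh_zero : hh 0 = 1 := rfl

lemma hh_neg {d : ℤ} (h : d < 0) : hh d = 0 := by
  match d, h with
  | Int.negSucc k, _ => rfl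

lemma ee_zero : ee 0 = 1 := by
  simp [ee, schur, Matrix.det_fin_zero]

lemma succAbove_val {n : ℕ} (p : Fin (n+1)) (i : Fin n) :
    ((p.succAbove i : Fin (n+1)) : ℕ) = if (i:ℕ) < (p:ℕ) then (i:ℕ) else (i:ℕ)+1 := by
  rcases lt_or_ge (i.castSucc) p with h | h
  · rw [Fin.succAbove_of_castSucc_lt _ _ h, Fin.coe_castSucc,
      if_pos (by simpa [Fin.lt_iff_val_lt_val] using h)]
  · rw [Fin.succAbove_of_le_castSucc _ _ h, Fin.val_succ,
      if_neg (by simpa [Fin.le_iff_val_le_val, Nat.not_lt] using h)]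

/-- `hkF m p = ∑_{c<p} (-1)^c h_{m+c} e_{p-1-c}`, the hook Schur function `s_{(m,1^{p-1})}`. -/
def hkF (m p : ℕ) : SymF := ∑ c ∈ range p, (-1)^c * hh (m + c) * ee (p - 1 - c)

lemma hkF_succ (m p : ℕ) : hkF m (p+1) = hh m * ee p - hkF (m+1) p := by
  rw [hkF, Finset.sum_range_succ']
  have h1 : ∀ c ∈ range p, (-1:SymF)^(c+1) * hh ((m:ℤ) + ((c+1:ℕ):ℤ)) * ee (p+1-1-(c+1))
      = -((-1)^c * hh (((m+1:ℕ):ℤ) + (c:ℤ)) * ee (p-1-c)) := by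
    intro c _
    have e1 : ((m:ℤ) + ((c+1:ℕ):ℤ)) = ((m+1:ℕ):ℤ) + (c:ℤ) := by push_cast; ring
    have e2 : p+1-1-(c+1) = p-1-c := by omega
    rw [e1, e2]; ring
  rw [Finset.sum_congr rfl h1, Finset.sum_neg_distrib]
  simp [hkF]
  ring

lemma hook_rec (m q : ℕ) :
    schur (q+2) (fun k => if (k:ℕ) = 0 then m else 1)
      = hh m * ee (q+1) - schur (q+1) (fun k => if (k:ℕ) = 0 then (m+1) else 1) := by
  set A : Matrix (Fin (q+1+1)) (Fin (q+1+1)) SymF :=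
    Matrix.of (fun i j : Fin (q+1+1) =>
      hh (((if (i:ℕ) = 0 then m else 1 : ℕ) : ℤ) + (j:ℤ) - (i:ℤ))) with hAdef
  have key : schur (q+2) (fun k => if (k:ℕ) = 0 then m else 1) = A.det := rfl
  have e00 : A 0 0 = hh m := by simp [hAdef]
  have e10 : A 1 0 = 1 := by
    simp only [hAdef, Matrix.of_apply, Fin.val_one, Fin.val_zero,
      if_neg (one_ne_zero : (1:ℕ) ≠ 0)]
    norm_num [hh_zero]
  have erest : ∀ i : Fin q, A i.succ.succ 0 = 0 := by
    intro i
    simp only [hAdef, Matrix.of_apply, Fin.val_succ, Fin.val_zero]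
    rw [if_neg (show ¬((i:ℕ)+1+1 = 0) by omega)]
    apply hh_neg
    push_cast
    omega
  have m0 : (A.submatrix (0 : Fin (q+1+1)).succAbove Fin.succ).det = ee (q+1) := by
    rw [ee, schur]
    congr 1
    ext i j
    simp only [Matrix.submatrix_apply, hAdef, Matrix.of_apply, Fin.succAbove_zero,
      Fin.val_succ]
    rw [if_neg (show ¬((i:ℕ)+1 = 0) by omega)]
    congr 1
    push_cast
    ring
  have m1 : (A.submatrix (1 : Fin (q+1+1)).succAbove Fin.succ).det
      = schur (q+1) (fun k => if (k:ℕ) = 0 then (m+1) else 1) := by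
    rw [schur]
    congr 1
    ext i j
    simp only [Matrix.submatrix_apply, hAdef, Matrix.of_apply, Fin.val_succ]
    have hv : (((1:Fin (q+1+1)).succAbove i : Fin (q+1+1)) : ℕ)
        = if (i:ℕ) < 1 then (i:ℕ) else (i:ℕ)+1 := by
      rw [succAbove_val, Fin.val_one]
    rcases Nat.lt_or_ge (i:ℕ) 1 with h | h
    · have hi0 : (i:ℕ) = 0 := by omega
      rw [hv, if_pos h, hi0]
      simp only [if_pos rfl]
      congr 1
      push_cast [hi0]
      ring
    · rw [hv, if_neg (show ¬((i:ℕ) < 1) by omega),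
        if_neg (show ¬((i:ℕ)+1 = 0) by omega),
        if_neg (show ¬((i:ℕ) = 0) by omega)]
      congr 1
      push_cast
      ring
  rw [key, Matrix.det_succ_column_zero, Fin.sum_univ_succ, Fin.sum_univ_succ,
    Fin.succ_zero_eq_one]
  have hsum0 : (∑ i : Fin q, (-1:SymF) ^ ((i.succ.succ : Fin (q+1+1)) : ℕ) *
      A i.succ.succ 0 * (A.submatrix i.succ.succ.succAbove Fin.succ).det) = 0 := by
    apply Finset.sum_eq_zero
    intro i _
    rw [erest i]
    ring
  rw [hsum0, e00, e10, m0, m1]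
  simp only [Fin.val_zero, Fin.val_one, pow_zero, pow_one]
  ring

lemma hookCF (q : ℕ) : ∀ m : ℕ,
    schur (q+1) (fun k => if (k:ℕ) = 0 then m else 1) = hkF m (q+1) := by
  induction q with
  | zero =>
    intro m
    rw [hkF, Finset.sum_range_one, schur]
    rw [Matrix.det_fin_one]
    simp [ee_zero]
  | succ q ih =>
    intro m
    rw [hook_rec, ih (m+1), hkF_succ m (q+1)]

lemma ee_hook (n : ℕ) : ee (n+1) = schur (n+1) (fun k => if (k:ℕ) = 0 then 1 else 1) := by
  rw [ee]
  congr 1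
  ext k
  simp

lemma ee_eq_hkF (n : ℕ) : ee (n+1) = hkF 1 (n+1) := by
  rw [ee_hook, hookCF]

lemma starId (d : ℕ) :
    (∑ t ∈ range (d+1), hh t * ((-1:SymF)^(d-t) * ee (d-t))) = if d = 0 then 1 else 0 := by
  cases d with
  | zero => simp [hh_zero, ee_zero]
  | succ d =>
    rw [if_neg (Nat.succ_ne_zero d), Finset.sum_range_succ']
    have h0 : hh ((0:ℕ):ℤ) * ((-1:SymF)^(d+1-0) * ee (d+1-0)) = (-1)^(d+1) * ee (d+1) := by
      rw [Nat.sub_zero, show ((0:ℕ):ℤ) = 0 by norm_num, hh_zero, one_mul]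
    rw [h0, ee_eq_hkF, hkF, Finset.mul_sum, ← Finset.sum_add_distrib]
    apply Finset.sum_eq_zero
    intro c hc
    have hc' : c < d+1 := Finset.mem_range.mp hc
    have e1 : d+1-(c+1) = d-c := by omega
    have e2 : ((c+1:ℕ):ℤ) = ((1:ℕ):ℤ) + (c:ℤ) := by push_cast; ring
    have e3 : d+1-1-c = d-c := by omega
    rw [e1, e2, e3]
    have e4 : (-1:SymF)^(d+1) * ((-1)^c * hh (((1:ℕ):ℤ) + (c:ℤ)) * ee (d-c))
        = -((-1)^(d-c) * (hh (((1:ℕ):ℤ) + (c:ℤ)) * ee (d-c))) := by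
      have h5 : (-1:SymF)^(d+1) * (-1)^c = -(-1)^(d-c) := by
        have h6 : d+1+c = (d-c) + (2*c+1) := by omega
        rw [← pow_add, h6, pow_add, pow_add, pow_mul]
        norm_num
      rw [show (-1:SymF)^(d+1) * ((-1)^c * hh (((1:ℕ):ℤ) + (c:ℤ)) * ee (d-c))
          = ((-1:SymF)^(d+1) * (-1)^c) * (hh (((1:ℕ):ℤ) + (c:ℤ)) * ee (d-c)) by ring, h5]
      ring
    rw [e4]
    ring

/-- The Toeplitz matrix of complete homogeneous symmetric functions. -/
def Hm (N : ℕ) : Matrix (Fin N) (Fin N) SymF := Matrix.of fun i j => hh ((j:ℤ) - (i:ℤ))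

/-- Its inverse: signed elementary symmetric functions. -/
def Bm (N : ℕ) : Matrix (Fin N) (Fin N) SymF :=
  Matrix.of fun i j => if (i:ℕ) ≤ (j:ℕ) then (-1:SymF)^((j:ℕ)-(i:ℕ)) * ee ((j:ℕ)-(i:ℕ)) else 0

lemma detH (N : ℕ) : (Hm N).det = 1 := by
  rw [Matrix.det_of_upperTriangular (M := Hm N)]
  · apply Finset.prod_eq_one
    intro i _
    simp [Hm, hh_zero]
  · intro i j h
    have h' : (j:ℕ) < (i:ℕ) := h
    exact hh_neg (show (j:ℤ) - (i:ℤ) < 0 by omega)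

lemma HB (N : ℕ) : Hm N * Bm N = 1 := by
  apply Matrix.ext
  intro i j
  rw [Matrix.mul_apply]
  by_cases hij : (i:ℕ) ≤ (j:ℕ)
  · set F : ℕ → SymF := fun t => hh ((t:ℤ) - (i:ℕ)) *
      (if t ≤ (j:ℕ) then (-1:SymF)^((j:ℕ)-t) * ee ((j:ℕ)-t) else 0) with hF
    have h1 : ∀ k : Fin N, Hm N i k * Bm N k j = F (k:ℕ) := by
      intro k; simp [Hm, Bm, hF]
    rw [Finset.sum_congr rfl (fun k _ => h1 k)]
    rw [Fin.sum_univ_eq_sum_range F N]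
    have h2 : ∑ t ∈ range N, F t = ∑ t ∈ Finset.Icc (i:ℕ) (j:ℕ), F t := by
      apply (Finset.sum_subset ?_ ?_).symm
      · intro t ht
        simp only [Finset.mem_Icc] at ht
        exact Finset.mem_range.mpr (lt_of_le_of_lt ht.2 j.isLt)
      · intro t _ ht
        simp only [Finset.mem_Icc, not_and, Nat.not_le] at ht
        rcases Nat.lt_or_ge t (i:ℕ) with h | h
        · rw [hF]
          simp only
          rw [hh_neg (by omega), zero_mul]
        · rw [hF]
          simp only
          rw [if_neg (by omega), mul_zero]
    rw [h2]
    have h3 : ∑ t ∈ Finset.Icc (i:ℕ) (j:ℕ), F t = ∑ t ∈ range ((j:ℕ)+1-(i:ℕ)), F ((i:ℕ)+t) := by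
      rw [← Finset.Ico_add_one_right_eq_Icc, Finset.sum_Ico_eq_sum_range]
    rw [h3]
    set d := (j:ℕ) - (i:ℕ) with hd
    have hd1 : (j:ℕ)+1-(i:ℕ) = d+1 := by omega
    have h4 : ∀ t ∈ range (d+1), F ((i:ℕ)+t) = hh t * ((-1:SymF)^(d-t) * ee (d-t)) := by
      intro t ht
      have ht' : t ≤ d := by simpa using Nat.lt_succ_iff.mp (Finset.mem_range.mp ht)
      rw [hF]
      simp only
      rw [if_pos (by omega)]
      have e1 : (((i:ℕ)+t : ℕ):ℤ) - ((i:ℕ):ℤ) = (t:ℤ) := by push_cast; ring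
      have e2 : (j:ℕ) - ((i:ℕ)+t) = d - t := by omega
      rw [e1, e2]
    rw [hd1, Finset.sum_congr rfl h4, starId]
    rw [Matrix.one_apply]
    by_cases hij2 : i = j
    · subst hij2
      rw [if_pos rfl, if_pos (show d = 0 by omega)]
    · have : ¬ (d = 0) := by
        simp only [hd]
        intro h
        exact hij2 (Fin.ext (by omega))
      rw [if_neg this, if_neg hij2]
  · have h1 : ∀ k : Fin N, Hm N i k * Bm N k j = 0 := by
      intro k
      rcases Nat.lt_or_ge (k:ℕ) (i:ℕ) with h | h
      · simp only [Hm, Matrix.of_apply]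
        rw [hh_neg (by omega), zero_mul]
      · simp only [Bm, Matrix.of_apply]
        rw [if_neg (by omega), mul_zero]
    rw [Finset.sum_congr rfl (fun k _ => h1 k), Finset.sum_const_zero]
    rw [Matrix.one_apply, if_neg (fun h => hij (by rw [h]))]
lemma jacobi22 {N : ℕ} (H B : Matrix (Fin (N+2)) (Fin (N+2)) SymF)
    (hHB : H * B = 1) (hdet : H.det = 1)
    (a1 b1 : Fin (N+2)) (a2 b2 : Fin (N+1)) :
    (H.submatrix (fun i => a1.succAbove (a2.succAbove i))
        (fun j => b1.succAbove (b2.succAbove j))).det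
      = (-1)^((a1:ℕ)+(a2:ℕ)+(b1:ℕ)+(b2:ℕ)) *
        (B b1 a1 * B (b1.succAbove b2) (a1.succAbove a2)
          - B b1 (a1.succAbove a2) * B (b1.succAbove b2) a1) := by
  set a3 := a1.succAbove a2 with ha3
  set b3 := b1.succAbove b2 with hb3
  have hbne : b3 ≠ b1 := Fin.succAbove_ne b1 b2
  set c : Fin 2 → Fin (N+2) := ![a1, a3] with hc
  set dd : Fin 2 → Fin (N+2) := ![b1, b3] with hdd
  set A : Matrix (Fin (N+2)) (Fin (N+2)) SymF :=
    Matrix.of (fun x y => if y = b1 then (if x = a1 then 1 else 0)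
      else if y = b3 then (if x = a3 then 1 else 0) else H x y) with hA
  set U : Matrix (Fin (N+2)) (Fin 2) SymF :=
    Matrix.of (fun x t => B x (c t) - (1 : Matrix (Fin (N+2)) (Fin (N+2)) SymF) x (dd t)) with hU
  set W : Matrix (Fin 2) (Fin (N+2)) SymF :=
    Matrix.of (fun t y => (1 : Matrix (Fin (N+2)) (Fin (N+2)) SymF) (dd t) y) with hW
  have hHU : H * U = Matrix.of (fun x t =>
      (1 : Matrix (Fin (N+2)) (Fin (N+2)) SymF) x (c t) - H x (dd t)) := by
    apply Matrix.ext; intro x t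
    rw [Matrix.mul_apply, Matrix.of_apply]
    have h1 : ∀ y : Fin (N+2), H x y * U y t
        = H x y * B y (c t) - H x y * (1 : Matrix (Fin (N+2)) (Fin (N+2)) SymF) y (dd t) := by
      intro y
      have : U y t = B y (c t) - (1 : Matrix (Fin (N+2)) (Fin (N+2)) SymF) y (dd t) := rfl
      rw [this]; ring
    rw [Finset.sum_congr rfl (fun y _ => h1 y), Finset.sum_sub_distrib,
      ← Matrix.mul_apply, ← Matrix.mul_apply, hHB, Matrix.mul_one]
  have hAM : A = H * (1 + U * W) := by
    rw [Matrix.mul_add, Matrix.mul_one, ← Matrix.mul_assoc, hHU]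
    apply Matrix.ext; intro x y
    rw [Matrix.add_apply, Matrix.mul_apply, Fin.sum_univ_two]
    show (if y = b1 then (if x = a1 then (1:SymF) else 0)
        else if y = b3 then (if x = a3 then 1 else 0) else H x y)
      = H x y + (((1 : Matrix (Fin (N+2)) (Fin (N+2)) SymF) x a1 - H x b1)
            * (1 : Matrix (Fin (N+2)) (Fin (N+2)) SymF) b1 y
          + ((1 : Matrix (Fin (N+2)) (Fin (N+2)) SymF) x a3 - H x b3)
            * (1 : Matrix (Fin (N+2)) (Fin (N+2)) SymF) b3 y)
    by_cases hy1 : y = b1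
    · subst hy1
      rw [if_pos rfl, Matrix.one_apply_eq, Matrix.one_apply_ne hbne]
      simp only [Matrix.one_apply]
      ring
    · rw [if_neg hy1, Matrix.one_apply_ne (fun h : b1 = y => hy1 h.symm)]
      by_cases hy3 : y = b3
      · subst hy3
        rw [if_pos rfl, Matrix.one_apply_eq]
        simp only [Matrix.one_apply]
        ring
      · rw [if_neg hy3, Matrix.one_apply_ne (fun h : b3 = y => hy3 h.symm)]
        ring
  have hWU : (1 + W * U) = Matrix.of (fun t u : Fin 2 => B (dd t) (c u)) := by
    apply Matrix.ext; intro t u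
    rw [Matrix.add_apply, Matrix.mul_apply]
    have h1 : ∀ j : Fin (N+2), j ≠ dd t → W t j * U j u = 0 := by
      intro j hj
      have h0 : W t j = (0:SymF) := Matrix.one_apply_ne (fun h => hj h.symm)
      rw [h0, zero_mul]
    rw [Finset.sum_eq_single (dd t) (fun j _ hj => h1 j hj)
      (fun h => absurd (Finset.mem_univ _) h)]
    have hW1 : W t (dd t) = (1:SymF) := Matrix.one_apply_eq _
    rw [hW1, one_mul]
    show (1 : Matrix (Fin 2) (Fin 2) SymF) t u
        + (B (dd t) (c u) - (1 : Matrix (Fin (N+2)) (Fin (N+2)) SymF) (dd t) (dd u))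
      = B (dd t) (c u)
    have h2 : (1 : Matrix (Fin (N+2)) (Fin (N+2)) SymF) (dd t) (dd u)
        = (1 : Matrix (Fin 2) (Fin 2) SymF) t u := by
      by_cases htu : t = u
      · subst htu; rw [Matrix.one_apply_eq, Matrix.one_apply_eq]
      · have hddinj : dd 0 ≠ dd 1 := fun h => hbne h.symm
        have hne : dd t ≠ dd u := by
          fin_cases t <;> fin_cases u <;>
            first
              | exact absurd rfl htu
              | exact hddinj
              | exact hddinj.symm
        rw [Matrix.one_apply_ne hne, Matrix.one_apply_ne htu]
    rw [h2]; ring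
  have hdetA : A.det = B b1 a1 * B b3 a3 - B b1 a3 * B b3 a1 := by
    rw [hAM, Matrix.det_mul, hdet, one_mul, Matrix.det_one_add_mul_comm, hWU,
      Matrix.det_fin_two]
    rfl
  have hcol1 : ∀ x, A x b1 = if x = a1 then (1:SymF) else 0 := by
    intro x
    show (if b1 = b1 then (if x = a1 then (1:SymF) else 0) else _) = _
    rw [if_pos rfl]
  have step1 : A.det = (-1:SymF)^((a1:ℕ)+(b1:ℕ)) * (A.submatrix a1.succAbove b1.succAbove).det := by
    rw [Matrix.det_succ_column A b1]
    rw [Finset.sum_eq_single a1 ?_ ?_]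
    · rw [hcol1 a1, if_pos rfl, mul_one]
    · intro x _ hx
      rw [hcol1 x, if_neg hx, mul_zero, zero_mul]
    · intro h; exact absurd (Finset.mem_univ _) h
  have hcol2 : ∀ x : Fin (N+1), (A.submatrix a1.succAbove b1.succAbove) x b2
      = if x = a2 then (1:SymF) else 0 := by
    intro x
    show (if b3 = b1 then (if a1.succAbove x = a1 then (1:SymF) else 0)
        else if b3 = b3 then (if a1.succAbove x = a3 then (1:SymF) else 0)
        else H (a1.succAbove x) b3) = _
    rw [if_neg hbne, if_pos rfl]
    by_cases hx : x = a2
    · subst hx; rw [if_pos rfl, if_pos rfl]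
    · rw [if_neg hx, if_neg (fun h => hx (Fin.succAbove_right_injective h))]
  have step2 : (A.submatrix a1.succAbove b1.succAbove).det
      = (-1:SymF)^((a2:ℕ)+(b2:ℕ))
        * ((A.submatrix a1.succAbove b1.succAbove).submatrix a2.succAbove b2.succAbove).det := by
    rw [Matrix.det_succ_column (A.submatrix a1.succAbove b1.succAbove) b2]
    rw [Finset.sum_eq_single a2 ?_ ?_]
    · rw [hcol2 a2, if_pos rfl, mul_one]
    · intro x _ hx
      rw [hcol2 x, if_neg hx, mul_zero, zero_mul]
    · intro h; exact absurd (Finset.mem_univ _) h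
  have step3 : (A.submatrix a1.succAbove b1.succAbove).submatrix a2.succAbove b2.succAbove
      = H.submatrix (fun i => a1.succAbove (a2.succAbove i))
          (fun j => b1.succAbove (b2.succAbove j)) := by
    apply Matrix.ext; intro i j
    have hne1 : b1.succAbove (b2.succAbove j) ≠ b1 := Fin.succAbove_ne b1 _
    have hne3 : b1.succAbove (b2.succAbove j) ≠ b3 := by
      intro h
      exact Fin.succAbove_ne b2 j (Fin.succAbove_right_injective h)
    show (if b1.succAbove (b2.succAbove j) = b1
        then (if a1.succAbove (a2.succAbove i) = a1 then (1:SymF) else 0)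
        else if b1.succAbove (b2.succAbove j) = b3
          then (if a1.succAbove (a2.succAbove i) = a3 then (1:SymF) else 0)
          else H (a1.succAbove (a2.succAbove i)) (b1.succAbove (b2.succAbove j))) = _
    rw [if_neg hne1, if_neg hne3]
    rfl
  have key : B b1 a1 * B b3 a3 - B b1 a3 * B b3 a1
      = (-1:SymF)^((a1:ℕ)+(b1:ℕ)) * ((-1:SymF)^((a2:ℕ)+(b2:ℕ)) *
        (H.submatrix (fun i => a1.succAbove (a2.succAbove i))
          (fun j => b1.succAbove (b2.succAbove j))).det) := by
    rw [← step3, ← step2, ← step1, hdetA]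
  rw [key, ← mul_assoc, ← mul_assoc, ← pow_add, ← pow_add]
  have hone : (-1:SymF)^((a1:ℕ)+(a2:ℕ)+(b1:ℕ)+(b2:ℕ)+((a1:ℕ)+(b1:ℕ))+((a2:ℕ)+(b2:ℕ))) = 1 :=
    Even.neg_one_pow ⟨(a1:ℕ)+(a2:ℕ)+(b1:ℕ)+(b2:ℕ), by ring⟩
  rw [hone, one_mul]

lemma shapeCF (n p m : ℕ) (hpn : p ≤ n) :
    schur (n+1) (fun k => if (k:ℕ) = 0 then m else if (k:ℕ) ≤ p then 2 else 1)
      = ee p * hkF m (n+1) - ee (n+1) * hkF m p := by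
  have hc_le : ∀ c : Fin (n+1), (c:ℕ) ≤ n := fun c => Nat.lt_succ_iff.mp c.isLt
  set p1 : Fin (n+2) := ⟨p, by omega⟩ with hp1
  set A : Matrix (Fin (n+1)) (Fin (n+1)) SymF :=
    Matrix.of (fun i j : Fin (n+1) =>
      hh (((if (i:ℕ) = 0 then m else if (i:ℕ) ≤ p then 2 else 1 : ℕ) : ℤ) + (j:ℤ) - (i:ℤ))) with hA
  have key : schur (n+1) (fun k => if (k:ℕ) = 0 then m else if (k:ℕ) ≤ p then 2 else 1)
      = A.det := rfl
  have hminor : ∀ c : Fin (n+1), (A.submatrix Fin.succ c.succAbove).det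
      = ee p * ee (n - (c:ℕ)) - (if (c:ℕ) + 1 ≤ p then ee (n+1) * ee (p-1-(c:ℕ)) else 0) := by
    intro c
    have hsub : A.submatrix Fin.succ c.succAbove
        = (Hm (n+2)).submatrix (fun i => p1.succAbove ((Fin.last n).succAbove i))
            (fun j => (0 : Fin (n+2)).succAbove (c.succAbove j)) := by
      apply Matrix.ext; intro i j
      rw [Matrix.submatrix_apply, Matrix.submatrix_apply]
      have hvf : ((p1.succAbove ((Fin.last n).succAbove i)) : ℕ)
          = if (i:ℕ) < p then (i:ℕ) else (i:ℕ)+1 := by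
        rw [Fin.succAbove_last, succAbove_val, Fin.coe_castSucc, hp1]
      have hvg : (((0 : Fin (n+2)).succAbove (c.succAbove j)) : ℕ)
          = ((c.succAbove j : Fin (n+1)) : ℕ) + 1 := by
        rw [Fin.succAbove_zero, Fin.val_succ]
      show hh _ = hh _
      have hiv : ((i.succ : Fin (n+1)) : ℕ) = (i:ℕ)+1 := Fin.val_succ i
      rw [hiv, if_neg (show ¬((i:ℕ)+1 = 0) by omega)]
      congr 1
      rcases Nat.lt_or_ge (i:ℕ) p with h | h
      · rw [if_pos (show (i:ℕ)+1 ≤ p by omega)]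
        rw [show ((p1.succAbove ((Fin.last n).succAbove i) : Fin (n+2)) : ℤ)
            = (((p1.succAbove ((Fin.last n).succAbove i) : Fin (n+2)) : ℕ) : ℤ) from rfl]
        rw [show (((0 : Fin (n+2)).succAbove (c.succAbove j) : Fin (n+2)) : ℤ)
            = ((((0 : Fin (n+2)).succAbove (c.succAbove j) : Fin (n+2)) : ℕ) : ℤ) from rfl]
        rw [hvf, hvg, if_pos h]
        push_cast
        ring
      · rw [if_neg (show ¬((i:ℕ)+1 ≤ p) by omega)]
        rw [show ((p1.succAbove ((Fin.last n).succAbove i) : Fin (n+2)) : ℤ)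
            = (((p1.succAbove ((Fin.last n).succAbove i) : Fin (n+2)) : ℕ) : ℤ) from rfl]
        rw [show (((0 : Fin (n+2)).succAbove (c.succAbove j) : Fin (n+2)) : ℤ)
            = ((((0 : Fin (n+2)).succAbove (c.succAbove j) : Fin (n+2)) : ℕ) : ℤ) from rfl]
        rw [hvf, hvg, if_neg (show ¬((i:ℕ) < p) by omega)]
        push_cast
        ring
    rw [hsub, jacobi22 (Hm (n+2)) (Bm (n+2)) (HB (n+2)) (detH (n+2)) p1 0 (Fin.last n) c]
    have hvq : ((p1.succAbove (Fin.last n)) : ℕ) = n+1 := by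
      rw [succAbove_val, Fin.val_last, hp1, if_neg (show ¬(n < p) by omega)]
    have hvc : (((0:Fin (n+2)).succAbove c) : ℕ) = (c:ℕ)+1 := by
      rw [Fin.succAbove_zero, Fin.val_succ]
    have e1 : Bm (n+2) 0 p1 = (-1:SymF)^p * ee p := by
      show (if ((0:Fin (n+2)):ℕ) ≤ (p1:ℕ)
          then (-1:SymF)^((p1:ℕ)-((0:Fin (n+2)):ℕ)) * ee ((p1:ℕ)-((0:Fin (n+2)):ℕ)) else 0) = _
      rw [show ((0:Fin (n+2)):ℕ) = 0 from rfl, hp1]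
      rw [if_pos (Nat.zero_le p), Nat.sub_zero]
    have e2 : Bm (n+2) ((0:Fin (n+2)).succAbove c) (p1.succAbove (Fin.last n))
        = (-1:SymF)^(n-(c:ℕ)) * ee (n-(c:ℕ)) := by
      show (if (((0:Fin (n+2)).succAbove c):ℕ) ≤ ((p1.succAbove (Fin.last n)):ℕ)
          then (-1:SymF)^(((p1.succAbove (Fin.last n)):ℕ)-(((0:Fin (n+2)).succAbove c):ℕ))
            * ee (((p1.succAbove (Fin.last n)):ℕ)-(((0:Fin (n+2)).succAbove c):ℕ)) else 0) = _
      rw [hvq, hvc, if_pos (by have := hc_le c; omega),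
        show n+1-((c:ℕ)+1) = n-(c:ℕ) by omega]
    have e3 : Bm (n+2) 0 (p1.succAbove (Fin.last n)) = (-1:SymF)^(n+1) * ee (n+1) := by
      show (if ((0:Fin (n+2)):ℕ) ≤ ((p1.succAbove (Fin.last n)):ℕ)
          then (-1:SymF)^(((p1.succAbove (Fin.last n)):ℕ)-((0:Fin (n+2)):ℕ))
            * ee (((p1.succAbove (Fin.last n)):ℕ)-((0:Fin (n+2)):ℕ)) else 0) = _
      rw [hvq, show ((0:Fin (n+2)):ℕ) = 0 from rfl, if_pos (Nat.zero_le _), Nat.sub_zero]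
    have e4 : Bm (n+2) ((0:Fin (n+2)).succAbove c) p1
        = if (c:ℕ)+1 ≤ p then (-1:SymF)^(p-1-(c:ℕ)) * ee (p-1-(c:ℕ)) else 0 := by
      show (if (((0:Fin (n+2)).succAbove c):ℕ) ≤ (p1:ℕ)
          then (-1:SymF)^((p1:ℕ)-(((0:Fin (n+2)).succAbove c):ℕ))
            * ee ((p1:ℕ)-(((0:Fin (n+2)).succAbove c):ℕ)) else 0) = _
      rw [hvc, hp1]
      by_cases hcp : (c:ℕ)+1 ≤ p
      · rw [if_pos hcp, if_pos hcp, show p-((c:ℕ)+1) = p-1-(c:ℕ) by omega]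
      · rw [if_neg hcp, if_neg hcp]
    rw [e1, e2, e3, e4]
    rw [show (p1:ℕ) = p from rfl, show ((Fin.last n : Fin (n+1)):ℕ) = n from rfl,
      show ((0:Fin (n+2)):ℕ) = 0 from rfl]
    have hcn := hc_le c
    by_cases hcp : (c:ℕ)+1 ≤ p
    · rw [if_pos hcp, if_pos hcp]
      have hs1 : (-1:SymF)^(p+n+0+(c:ℕ)) * ((-1)^p * (-1)^(n-(c:ℕ))) = 1 := by
        rw [← pow_add, ← pow_add]
        exact Even.neg_one_pow ⟨p+n, by omega⟩
      have hs2 : (-1:SymF)^(p+n+0+(c:ℕ)) * ((-1)^(n+1) * (-1)^(p-1-(c:ℕ))) = 1 := by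
        rw [← pow_add, ← pow_add]
        exact Even.neg_one_pow ⟨p+n, by omega⟩
      linear_combination (ee p * ee (n-(c:ℕ))) * hs1 - (ee (n+1) * ee (p-1-(c:ℕ))) * hs2
    · rw [if_neg hcp, if_neg hcp]
      have hs1 : (-1:SymF)^(p+n+0+(c:ℕ)) * ((-1)^p * (-1)^(n-(c:ℕ))) = 1 := by
        rw [← pow_add, ← pow_add]
        exact Even.neg_one_pow ⟨p+n, by omega⟩
      linear_combination (ee p * ee (n-(c:ℕ))) * hs1
  -- now the row expansion
  rw [key, Matrix.det_succ_row_zero]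
  have hterm : ∀ c : Fin (n+1), (-1:SymF)^((c:ℕ)) * A 0 c * (A.submatrix Fin.succ c.succAbove).det
      = ((-1:SymF)^((c:ℕ)) * hh ((m:ℤ) + ((c:ℕ):ℤ)) * ee (n+1-1-(c:ℕ))) * ee p
        - (if (c:ℕ) < p then ((-1:SymF)^((c:ℕ)) * hh ((m:ℤ) + ((c:ℕ):ℤ)) * ee (p-1-(c:ℕ))) * ee (n+1) else 0) := by
    intro c
    have hA0 : A 0 c = hh ((m:ℤ) + ((c:ℕ):ℤ)) := by
      rw [hA]
      simp only [Matrix.of_apply]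
      rw [show ((0:Fin (n+1)):ℕ) = 0 from rfl, if_pos rfl]
      congr 1
    rw [hA0, hminor c, show n+1-1-(c:ℕ) = n - (c:ℕ) by omega]
    by_cases hcp : (c:ℕ)+1 ≤ p
    · rw [if_pos hcp, if_pos (show (c:ℕ) < p by omega)]
      ring
    · rw [if_neg hcp, if_neg (show ¬((c:ℕ) < p) by omega)]
      ring
  rw [Finset.sum_congr rfl (fun c _ => hterm c)]
  rw [Finset.sum_sub_distrib]
  have hsum1 : (∑ c : Fin (n+1), ((-1:SymF)^((c:ℕ)) * hh ((m:ℤ) + ((c:ℕ):ℤ)) * ee (n+1-1-(c:ℕ))) * ee p)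
      = ee p * hkF m (n+1) := by
    rw [← Finset.sum_mul, mul_comm, hkF]
    congr 1
    exact Fin.sum_univ_eq_sum_range (fun c => (-1:SymF)^c * hh ((m:ℤ) + (c:ℤ)) * ee (n+1-1-c)) (n+1)
  have hsum2 : (∑ c : Fin (n+1), (if (c:ℕ) < p then ((-1:SymF)^((c:ℕ)) * hh ((m:ℤ) + ((c:ℕ):ℤ)) * ee (p-1-(c:ℕ))) * ee (n+1) else 0))
      = ee (n+1) * hkF m p := by
    rw [show (∑ c : Fin (n+1), (if (c:ℕ) < p then ((-1:SymF)^((c:ℕ)) * hh ((m:ℤ) + ((c:ℕ):ℤ)) * ee (p-1-(c:ℕ))) * ee (n+1) else 0))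
        = ∑ c ∈ range (n+1), (if c < p then ((-1:SymF)^c * hh ((m:ℤ) + (c:ℤ)) * ee (p-1-c)) * ee (n+1) else 0) from
      Fin.sum_univ_eq_sum_range (fun c => (if c < p then ((-1:SymF)^c * hh ((m:ℤ) + (c:ℤ)) * ee (p-1-c)) * ee (n+1) else 0)) (n+1)]
    rw [← Finset.sum_filter]
    rw [show (range (n+1)).filter (fun c => c < p) = range p by
      ext x; simp only [Finset.mem_filter, Finset.mem_range]; omega]
    rw [← Finset.sum_mul, mul_comm, hkF]
  rw [hsum1, hsum2]

/-- Lemma 2.2: for `m ≥ 2`, `i ≥ 0`, `j - i ≥ 2`,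
`s_{(1^{i+1})} s_{(m,1^{j-1})} - s_{(1^i)} s_{(m,1^j)}
  = s_{(m+1,2^i,1^{j-i-1})} + s_{(m,2^{i+1},1^{j-i-2})}`. -/
theorem stmt1 (m i j : ℕ) (hm : 2 ≤ m) (hij : i + 2 ≤ j) :
    ee (i+1) * schur j (fun k => if (k : ℕ) = 0 then m else 1)
      - ee i * schur (j+1) (fun k => if (k : ℕ) = 0 then m else 1)
    = schur j (fun k => if (k : ℕ) = 0 then m + 1 else if (k : ℕ) ≤ i then 2 else 1)
      + schur j (fun k => if (k : ℕ) = 0 then m else if (k : ℕ) ≤ i + 1 then 2 else 1) := by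
  obtain ⟨n, rfl⟩ : ∃ n, j = n+1 := ⟨j-1, by omega⟩
  rw [hookCF n m, hookCF (n+1) m,
    shapeCF n i (m+1) (by omega), shapeCF n (i+1) m (by omega),
    hkF_succ m (n+1), hkF_succ m i]
  ring
end
end

section
/- For any i ≥ 1 and any partition λ, the product h_i · s_λ of the complete homogeneous symmetric function h_i with the Schur function s_λ equals the sum of s_μ over all partitions μ containing λ such that μ/λ is a horizontal strip of size i (i.e., |μ| = |λ| + i and λ_k ≤ μ_k ≤ λ_{k-1} for all k, where λ_0 = ∞). -/
open MvPolynomial Finset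

noncomputable section

/-! Let `H(t) = ∑ hₙ tⁿ`, and let `R` be the Jacobi–Trudi matrix of `(λ, 0)` in which every
entry `hₘ` is replaced by the series `∑ⱼ hₘ₊ⱼ tʲ`. Since each entry of `R` is `hₘ` plus `t` times
its right neighbour, column operations turn `R` into the Jacobi–Trudi matrix of `λ` bordered by
a last row `(0, …, 0, H(t))`, so `det R = H(t) s_λ`. Subtracting `t^(λₖ₋₁ - λₖ + 1)` times
row `k - 1` from row `k` truncates row `k` to the terms `hₘ t^(m - λₖ)` with `λₖ ≤ m ≤ λₖ₋₁`,
and truncating row `0` at degree `i` does not change the coefficient of `tⁱ`. Expanding the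
truncated determinant by multilinearity in the rows, its `tⁱ`-coefficient is the sum of `s_μ`
over the horizontal strips `μ/λ` of size `i`, while the `tⁱ`-coefficient of `H(t) s_λ` is
`hᵢ s_λ`. -/

namespace Matrix

variable {R : Type*} [CommRing R]

theorem det_of_sum_mul_rows {ι κ : Type*} [Fintype ι] [DecidableEq ι] (s : ι → Finset κ)
    (c : ι → κ → R) (v : ι → κ → ι → R) :
    det (of fun a b => ∑ m ∈ s a, c a m * v a m b)
      = ∑ p ∈ Fintype.piFinset s, (∏ a, c a (p a)) * det (of fun a b => v a (p a) b) := by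
  have h := (detRowAlternating : (ι → R) [⋀^ι]→ₗ[R] R).toMultilinearMap.map_sum_finset
    (fun a m => c a m • v a m) s
  simp only [MultilinearMap.map_smul_univ, smul_eq_mul] at h
  have hM : (of fun a b => ∑ m ∈ s a, c a m * v a m b) = fun a => ∑ m ∈ s a, c a m • v a m := by
    ext a b
    simp [Finset.sum_apply]
  rw [hM]
  exact h

theorem det_eq_of_forall_col_eq_smul_add_succ {n : ℕ} {A B : Matrix (Fin (n + 1)) (Fin (n + 1)) R}
    (c : Fin n → R) (A_last : ∀ i, A i (Fin.last n) = B i (Fin.last n))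
    (A_castSucc : ∀ i (j : Fin n), A i j.castSucc = B i j.castSucc + c j * A i j.succ) :
    det A = det B := by
  rw [← det_submatrix_equiv_self Fin.revPerm A, ← det_submatrix_equiv_self Fin.revPerm B]
  refine det_eq_of_forall_col_eq_smul_add_pred (c ∘ Fin.rev) (fun i => A_last _) fun i j => ?_
  simp only [submatrix_apply, Fin.revPerm_apply, Fin.rev_succ, Fin.rev_castSucc,
    Function.comp_apply]
  exact A_castSucc _ _

theorem det_eq_mul_det_of_row_last_eq_zero {n : ℕ} (A : Matrix (Fin (n + 1)) (Fin (n + 1)) R)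
    (h : ∀ j : Fin n, A (Fin.last n) j.castSucc = 0) :
    det A = A (Fin.last n) (Fin.last n) * det (A.submatrix Fin.castSucc Fin.castSucc) := by
  rw [det_succ_row A (Fin.last n), Fin.sum_univ_castSucc]
  simp [h, Fin.succAbove_last, ← two_mul, pow_mul]

end Matrix

open scoped PowerSeries

theorem PowerSeries.coeff_det_updateRow_add_X_pow_smul {R ι : Type*} [CommRing R] [Fintype ι]
    [DecidableEq ι] (M : Matrix ι ι R⟦X⟧) (a : ι) (n : ℕ) (v : ι → R⟦X⟧) :
    coeff n (M.updateRow a (M a + (X : R⟦X⟧) ^ (n + 1) • v)).det = coeff n M.det := by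
  rw [Matrix.det_updateRow_add, Matrix.det_updateRow_smul, Matrix.updateRow_eq_self, map_add,
    coeff_X_pow_mul', if_neg (by omega), add_zero]

theorem hh_of_neg {z : ℤ} (hz : z < 0) : hh z = 0 := by
  obtain ⟨n, rfl⟩ := Int.exists_eq_neg_ofNat hz.le
  cases n with
  | zero => simp at hz
  | succ n => rfl

def hSeries (c : ℤ) : SymF⟦X⟧ := PowerSeries.mk fun j => hh (c + j)

theorem hSeries_eq_C_add_X_mul (c : ℤ) :
    hSeries c = PowerSeries.C (hh c) + PowerSeries.X * hSeries (c + 1) := by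
  rw [add_comm, hSeries, PowerSeries.eq_X_mul_shift_add_const (PowerSeries.mk _)]
  simp [hSeries, add_assoc, add_comm (1 : ℤ)]

theorem hSeries_eq_sum_Icc_add (d : ℤ) {lo hi : ℕ} (h : lo ≤ hi) :
    hSeries (lo + d) = ∑ m ∈ Icc lo hi, PowerSeries.X ^ (m - lo) * PowerSeries.C (hh (m + d))
      + PowerSeries.X ^ (hi + 1 - lo) * hSeries (hi + 1 + d) := by
  refine PowerSeries.ext fun n => ?_
  simp only [hSeries, map_add, map_sum, PowerSeries.coeff_mk, PowerSeries.coeff_X_pow_mul',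
    mul_comm (PowerSeries.X ^ _) (PowerSeries.C _), PowerSeries.coeff_C_mul_X_pow]
  by_cases hn : n ≤ hi - lo
  · rw [Finset.sum_eq_single_of_mem (lo + n) (mem_Icc.mpr ⟨by omega, by omega⟩)
      (fun m hm _ => if_neg (by rw [mem_Icc] at hm; omega)), if_pos (by omega), if_neg (by omega),
      add_zero]
    congr 1
    omega
  · rw [Finset.sum_eq_zero (fun m hm => if_neg (by rw [mem_Icc] at hm; omega)), if_pos (by omega),
      zero_add]
    congr 1
    omega

theorem coeff_hSeries_zero_mul_C (n : ℕ) (s : SymF) :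
    PowerSeries.coeff n (hSeries 0 * PowerSeries.C s) = hh n * s := by
  simp [hSeries, PowerSeries.coeff_mul_C]

def hSeriesMatrix {n : ℕ} (lo : Fin n → ℕ) : Matrix (Fin n) (Fin n) SymF⟦X⟧ :=
  Matrix.of fun a b => hSeries ((lo a : ℤ) + b - a)

def truncMatrix {n : ℕ} (lo hi : Fin n → ℕ) : Matrix (Fin n) (Fin n) SymF⟦X⟧ :=
  Matrix.of fun a b => ∑ m ∈ Icc (lo a) (hi a),
    PowerSeries.X ^ (m - lo a) * PowerSeries.C (hh ((m : ℤ) + b - a))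

theorem det_truncMatrix {n : ℕ} (lo hi : Fin n → ℕ) :
    (truncMatrix lo hi).det = ∑ ν ∈ Fintype.piFinset fun a => Icc (lo a) (hi a),
      PowerSeries.X ^ (∑ a, (ν a - lo a)) * PowerSeries.C (schur n ν) := by
  rw [truncMatrix, Matrix.det_of_sum_mul_rows]
  refine Finset.sum_congr rfl fun ν _ => ?_
  rw [Finset.prod_pow_eq_pow_sum, schur, RingHom.map_det]
  rfl

theorem coeff_det_truncMatrix {n : ℕ} (lo hi : Fin n → ℕ) (i : ℕ) :
    PowerSeries.coeff i (truncMatrix lo hi).det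
      = ∑ ν ∈ (Fintype.piFinset fun a => Icc (lo a) (hi a)).filter
          (fun ν => ∑ a, (ν a - lo a) = i), schur n ν := by
  simp only [det_truncMatrix, map_sum, mul_comm (PowerSeries.X ^ _), PowerSeries.coeff_C_mul_X_pow,
    Finset.sum_filter, eq_comm]

theorem hSeriesMatrix_eq_truncMatrix_add {n : ℕ} (lo hi : Fin n → ℕ) (a b : Fin n)
    (h : lo a ≤ hi a) :
    hSeriesMatrix lo a b = truncMatrix lo hi a b
      + PowerSeries.X ^ (hi a + 1 - lo a) * hSeries ((hi a : ℤ) + 1 + b - a) := by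
  have key := hSeries_eq_sum_Icc_add ((b : ℤ) - a) h
  simp only [← add_sub_assoc] at key
  exact key

theorem det_hSeriesMatrix_eq_det_updateRow_truncMatrix {n : ℕ} (lo hi : Fin (n + 1) → ℕ)
    (hlo : Antitone lo) (hhi : ∀ k : Fin n, hi k.succ = lo k.castSucc) :
    (hSeriesMatrix lo).det = ((truncMatrix lo hi).updateRow 0 (hSeriesMatrix lo 0)).det := by
  refine Matrix.det_eq_of_forall_row_eq_smul_add_pred
    (fun k => PowerSeries.X ^ (lo k.castSucc + 1 - lo k.succ)) (by simp) fun k b => ?_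
  rw [Matrix.updateRow_ne (Fin.succ_ne_zero k),
    hSeriesMatrix_eq_truncMatrix_add lo hi _ _ (hhi k ▸ hlo k.castSucc_le_succ), hhi]
  simp only [hSeriesMatrix, Matrix.of_apply, Fin.val_succ, Fin.val_castSucc]
  congr 3
  push_cast
  ring

theorem coeff_det_hSeriesMatrix {n : ℕ} (lo hi : Fin (n + 1) → ℕ) (i : ℕ)
    (hlo : Antitone lo) (hhi : ∀ k : Fin n, hi k.succ = lo k.castSucc)
    (hhi0 : hi 0 = lo 0 + i) :
    PowerSeries.coeff i (hSeriesMatrix lo).det = PowerSeries.coeff i (truncMatrix lo hi).det := by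
  have hrow : hSeriesMatrix lo 0 = truncMatrix lo hi 0
      + (PowerSeries.X : SymF⟦X⟧) ^ (i + 1) • fun b : Fin (n + 1) =>
        hSeries ((hi 0 : ℤ) + 1 + b) := by
    ext1 b
    rw [hSeriesMatrix_eq_truncMatrix_add lo hi 0 b (by omega), hhi0]
    simp [show lo 0 + i + 1 - lo 0 = i + 1 by omega]
  rw [det_hSeriesMatrix_eq_det_updateRow_truncMatrix lo hi hlo hhi, hrow,
    PowerSeries.coeff_det_updateRow_add_X_pow_smul]

theorem det_hSeriesMatrix_snoc_zero {l : ℕ} (lam : Fin l → ℕ) :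
    (hSeriesMatrix (Fin.snoc lam 0 : Fin (l + 1) → ℕ)).det
      = hSeries 0 * PowerSeries.C (schur l lam) := by
  set lo : Fin (l + 1) → ℕ := Fin.snoc lam 0
  set S := ((Matrix.of fun a b : Fin (l + 1) => hh ((lo a : ℤ) + b - a)).map
    PowerSeries.C).updateCol (Fin.last l) fun a => hSeriesMatrix lo a (Fin.last l)
  have hcol : (hSeriesMatrix lo).det = S.det := by
    refine Matrix.det_eq_of_forall_col_eq_smul_add_succ (fun _ => PowerSeries.X) (by simp [S])
      fun a j => ?_
    simp only [S, Matrix.updateCol_ne (Fin.castSucc_ne_last j), Matrix.map_apply,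
      Matrix.of_apply, hSeriesMatrix]
    rw [hSeries_eq_C_add_X_mul]
    congr 3
    simp only [Fin.val_succ, Fin.val_castSucc]
    push_cast
    ring
  have hlast : ∀ j : Fin l, S (Fin.last l) j.castSucc = 0 := by
    intro j
    simp [S, lo, hh_of_neg]
  rw [hcol, Matrix.det_eq_mul_det_of_row_last_eq_zero S hlast]
  congr 1
  · simp [S, lo, hSeriesMatrix]
  · rw [schur, RingHom.map_det]
    congr 1
    ext a b
    simp [S, lo]

theorem Finset.sum_filter_val_mem_eq_sum {ι M : Type*} [Fintype ι] [DecidableEq ι]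
    [AddCommMonoid M] {N : ℕ} (T : Finset (ι → ℕ)) (hT : ∀ ν ∈ T, ∀ a, ν a ≤ N)
    (f : (ι → ℕ) → M) :
    ∑ μ ∈ univ.filter (fun μ : ι → Fin (N + 1) => (fun a => (μ a : ℕ)) ∈ T), f (fun a => μ a)
      = ∑ ν ∈ T, f ν := by
  refine Finset.sum_nbij (fun μ a => (μ a : ℕ)) (fun μ hμ => (Finset.mem_filter.mp hμ).2)
    (fun μ _ μ' _ h => funext fun a => Fin.ext (congrFun h a))
    (fun ν hν => ⟨fun a => ⟨ν a, Nat.lt_succ_of_le (hT ν hν a)⟩, by simpa using hν, rfl⟩)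
    fun _ _ => rfl

section HorizontalStrip

variable {l : ℕ} (lam : Fin l → ℕ) (i : ℕ)

def stripLower : Fin (l + 1) → ℕ := Fin.snoc lam 0

def stripUpper : Fin (l + 1) → ℕ := Fin.cons (stripLower lam 0 + i) lam

def horizontalStrips : Finset (Fin (l + 1) → ℕ) :=
  (Fintype.piFinset fun a => Icc (stripLower lam a) (stripUpper lam i a)).filter
    fun ν => ∑ a, (ν a - stripLower lam a) = i

variable {lam}

theorem antitone_stripLower (hlam : Antitone lam) : Antitone (stripLower lam) := by
  intro a b hab
  induction b using Fin.lastCases with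
  | last => simp [stripLower]
  | cast b =>
    induction a using Fin.lastCases with
    | last => exact absurd hab (not_le.2 (Fin.castSucc_lt_last b))
    | cast a => simpa [stripLower] using hlam (Fin.castSucc_le_castSucc_iff.mp hab)

theorem stripUpper_succ (k : Fin l) : stripUpper lam i k.succ = stripLower lam k.castSucc := by
  simp [stripUpper, stripLower]

theorem mem_horizontalStrips {ν : Fin (l + 1) → ℕ} :
    ν ∈ horizontalStrips lam i ↔ ∑ a, ν a = ∑ k, lam k + i ∧ (∀ k, lam k ≤ ν k.castSucc)
      ∧ ∀ k, ν k.succ ≤ lam k := by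
  have hlower : (∀ a, stripLower lam a ≤ ν a) ↔ ∀ k, lam k ≤ ν k.castSucc := by
    simp [Fin.forall_fin_succ', stripLower]
  have hupper : (∀ a, ν a ≤ stripUpper lam i a)
      ↔ ν 0 ≤ stripLower lam 0 + i ∧ ∀ k, ν k.succ ≤ lam k := by
    simp [Fin.forall_fin_succ, stripUpper]
  simp only [horizontalStrips, mem_filter, Fintype.mem_piFinset, mem_Icc, forall_and, ← hlower,
    hupper]
  suffices h : (∀ a, stripLower lam a ≤ ν a) →
      (∑ a, (ν a - stripLower lam a) = i ↔ ∑ a, ν a = ∑ k, lam k + i) by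
    refine ⟨fun ⟨⟨hlo, _, hup⟩, hsum⟩ => ⟨(h hlo).mp hsum, hlo, hup⟩,
      fun ⟨hsum, hlo, hup⟩ => ⟨⟨hlo, ?_, hup⟩, (h hlo).mpr hsum⟩⟩
    have := Finset.single_le_sum (fun a _ => Nat.zero_le (ν a - stripLower lam a))
      (Finset.mem_univ 0)
    rw [(h hlo).mpr hsum] at this
    omega
  intro hlo
  have hsum_lower : ∑ a, stripLower lam a = ∑ k, lam k := by
    simp [stripLower, Fin.sum_univ_castSucc]
  rw [Finset.sum_tsub_distrib _ fun a _ => hlo a, hsum_lower]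
  have := hsum_lower ▸ Finset.sum_le_sum fun a (_ : a ∈ univ) => hlo a
  omega

theorem le_of_mem_horizontalStrips {ν : Fin (l + 1) → ℕ} (h : ν ∈ horizontalStrips lam i)
    (a : Fin (l + 1)) : ν a ≤ ∑ k, lam k + i := by
  rw [← ((mem_horizontalStrips i).mp h).1]
  exact Finset.single_le_sum (fun a _ => Nat.zero_le _) (Finset.mem_univ a)

end HorizontalStrip

theorem stmt4_general (i l : ℕ) (lam : Fin l → ℕ) (hlam : Antitone lam) :
    hh (i : ℤ) * schur l lam
    = ∑ μ ∈ Finset.univ.filter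
        (fun μ : Fin (l+1) → Fin ((∑ k, lam k) + i + 1) =>
          (∑ k, (μ k : ℕ)) = (∑ k, lam k) + i ∧
          (∀ k : Fin l, lam k ≤ (μ k.castSucc : ℕ)) ∧
          (∀ k : Fin l, (μ k.succ : ℕ) ≤ lam k)),
        schur (l+1) (fun k => (μ k : ℕ)) := by
  calc hh (i : ℤ) * schur l lam = PowerSeries.coeff i (hSeries 0 * PowerSeries.C (schur l lam)) :=
        (coeff_hSeries_zero_mul_C i _).symm
    _ = PowerSeries.coeff i (hSeriesMatrix (stripLower lam)).det := by
        rw [stripLower, det_hSeriesMatrix_snoc_zero]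
    _ = PowerSeries.coeff i (truncMatrix (stripLower lam) (stripUpper lam i)).det :=
        coeff_det_hSeriesMatrix _ _ i (antitone_stripLower hlam) (stripUpper_succ i) rfl
    _ = ∑ ν ∈ horizontalStrips lam i, schur (l + 1) ν := coeff_det_truncMatrix _ _ i
    _ = _ := by
        rw [← Finset.sum_filter_val_mem_eq_sum _ fun ν hν => le_of_mem_horizontalStrips i hν]
        exact Finset.sum_congr (Finset.filter_congr fun μ _ => mem_horizontalStrips i)
          fun _ _ => rfl

/-- The Pieri rule: for `i ≥ 1` and a partition `λ` (with at most `l` parts),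
`h_i · s_λ = ∑_μ s_μ`, the sum over all partitions `μ ⊇ λ` such that `μ/λ` is a
horizontal strip of size `i`, i.e. `|μ| = |λ| + i` and `λ_k ≤ μ_k ≤ λ_{k-1}` for
all `k` (with `λ_0 = ∞`). Such a `μ` has at most `l+1` parts, and its parts are
bounded by `|λ| + i`, so `μ` ranges over functions `Fin (l+1) → Fin (|λ|+i+1)`. -/
theorem stmt4 (i l : ℕ) (hi : 1 ≤ i) (lam : Fin l → ℕ) (hlam : Antitone lam) :
    hh (i : ℤ) * schur l lam
    = ∑ μ ∈ Finset.univ.filter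
        (fun μ : Fin (l+1) → Fin ((∑ k, lam k) + i + 1) =>
          (∑ k, (μ k : ℕ)) = (∑ k, lam k) + i ∧
          (∀ k : Fin l, lam k ≤ (μ k.castSucc : ℕ)) ∧
          (∀ k : Fin l, (μ k.succ : ℕ) ≤ lam k)),
        schur (l+1) (fun k => (μ k : ℕ)) :=
  stmt4_general i l lam hlam

end
end

section
/- For m, d, j ≥ 1 with 2j ≤ d − 1 and for each x with 1 ≤ x ≤ min(m, d−2j), there is exactly one Littlewood-Richardson tableau of skew shape (m+d−2j, (d−2j+1)^j) / ((d−2j−1)^j) and content (m+d−2j−x+1, x+1, 2^{j−1}); moreover every Littlewood-Richardson tableau of this shape has content of this form for some such x. -/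
open Finset

/-- The cells of the skew shape `λ/μ` in row `r` are the columns `c` with
`μ_r ≤ c < λ_r`. `T` is a semistandard filling of `λ/μ` (with positive integer
entries, normalized to `0` outside the shape): weakly increasing along rows and
strictly increasing down columns. -/
def IsSSYT (L : ℕ) (lam mu : Fin L → ℕ) (T : Fin L → ℕ → ℕ) : Prop :=
  (∀ r c, ¬ (mu r ≤ c ∧ c < lam r) → T r c = 0) ∧
  (∀ r c, mu r ≤ c → c < lam r → 1 ≤ T r c) ∧
  (∀ r, ∀ c₁ c₂, mu r ≤ c₁ → c₁ ≤ c₂ → c₂ < lam r → T r c₁ ≤ T r c₂) ∧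
  (∀ r₁ r₂ : Fin L, r₁ < r₂ → ∀ c, mu r₁ ≤ c → c < lam r₁ → mu r₂ ≤ c → c < lam r₂ →
    T r₁ c < T r₂ c)

/-- The reverse reading word of a filling `T` of the skew shape `λ/μ`: the entries of
each row read from right to left, rows concatenated from top to bottom. -/
def revWord (L : ℕ) (lam mu : Fin L → ℕ) (T : Fin L → ℕ → ℕ) : List ℕ :=
  (List.finRange L).flatMap
    (fun r => (List.range (lam r - mu r)).map (fun k => T r (lam r - 1 - k)))

/-- A word is a lattice permutation: in every prefix, the number of `i`'s is at least
the number of `(i+1)`'s, for every `i ≥ 1`. -/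
def IsLatticeWord (w : List ℕ) : Prop :=
  ∀ p i, 1 ≤ i → (w.take p).count (i + 1) ≤ (w.take p).count i

/-- `T` is a Littlewood-Richardson tableau of shape `λ/μ`: a semistandard Young
tableau whose reverse reading word is a lattice permutation. -/
def IsLRTableau (L : ℕ) (lam mu : Fin L → ℕ) (T : Fin L → ℕ → ℕ) : Prop :=
  IsSSYT L lam mu T ∧ IsLatticeWord (revWord L lam mu T)

/-- `T` has content `ν`: for every `i ≥ 1`, the number of entries equal to `i`
is `ν_i`. -/
def HasContent (L : ℕ) (lam mu : Fin L → ℕ) (T : Fin L → ℕ → ℕ) (nu : ℕ → ℕ) : Prop :=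
  ∀ i, 1 ≤ i → (revWord L lam mu T).count i = nu i

/-- The content `(m+d-2j-x+1, x+1, 2^{j-1})`, as a function on `{1, 2, …}`. -/
def uniformContent (m d j x : ℕ) : ℕ → ℕ := fun i =>
  if i = 1 then m + d - 2*j - x + 1
  else if i = 2 then x + 1
  else if i ≤ j + 1 then 2 else 0

/-!
Write `k = d - 2j - 1`. Every entry in row `r` of an LR tableau is at most `r + 1`, because
its reading word can raise its maximum by at most one at a time. Columns `k` and `k + 1` run
through all rows, so column strictness bounds their entries in row `r` from below by `r + 1`;
the same holds trivially in row `0`. This forces every cell except those of the last row left of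
column `k`. What is read before those cells is `1^(m+1) 2 2 3 3 … (j+1) (j+1)`, so the lattice
condition only allows `1`s and `2`s there: the tableau is determined by its number `x - 1` of
such `2`s, its content records `x`, and the lattice condition on the `2`s says exactly `x ≤ m`.
-/

namespace IsLatticeWord

variable {u v : List ℕ} {a i k n : ℕ}

theorem count_succ_le_of_append (h : IsLatticeWord (u ++ v)) (hi : 1 ≤ i) :
    u.count (i + 1) ≤ u.count i := by
  simpa using h u.length i hi

theorem count_lt_count_pred (h : IsLatticeWord (u ++ a :: v)) (ha : 2 ≤ a) :
    u.count a < u.count (a - 1) := by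
  rw [show u ++ a :: v = (u ++ [a]) ++ v by simp] at h
  have := h.count_succ_le_of_append (i := a - 1) (by omega)
  rw [Nat.sub_add_cancel (by omega)] at this
  simp only [List.count_append, List.count_singleton_self,
    List.count_singleton, beq_iff_eq] at this
  split_ifs at this <;> omega

theorem le_succ_of_forall_le (h : IsLatticeWord (u ++ a :: v)) (hu : ∀ b ∈ u, b ≤ k) :
    a ≤ k + 1 := by
  by_contra! hak
  have := h.count_lt_count_pred (by omega)
  have := hu (a - 1) (List.count_pos_iff.mp (by omega))
  omega

theorem append_singleton (hu : IsLatticeWord u) (ha : 2 ≤ a → u.count a < u.count (a - 1)) :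
    IsLatticeWord (u ++ [a]) := by
  intro p i hi
  by_cases hp : p ≤ u.length
  · rw [List.take_append_of_le_length hp]
    exact hu p i hi
  · rw [List.take_of_length_le (by simp; omega)]
    have := hu u.length i hi
    rw [List.take_length] at this
    simp only [List.count_append, List.count_singleton, beq_iff_eq]
    split_ifs with h₁ h₂
    · omega
    · subst h₁
      have := ha (by omega)
      rw [Nat.add_sub_cancel] at this
      omega
    all_goals omega

theorem append_replicate (hu : IsLatticeWord u)
    (ha : 2 ≤ a → u.count a + n ≤ u.count (a - 1)) :
    IsLatticeWord (u ++ List.replicate n a) := by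
  induction n with
  | zero => simpa
  | succ n ih =>
    have hu' : IsLatticeWord (u ++ List.replicate n a) := ih fun h => by have := ha h; omega
    rw [List.replicate_succ', ← List.append_assoc]
    refine hu'.append_singleton fun h => ?_
    have := ha h
    simp only [List.count_append, List.count_replicate_self, List.count_replicate, beq_iff_eq]
    split_ifs <;> omega

end IsLatticeWord

theorem isLatticeWord_nil : IsLatticeWord [] := by
  simp [IsLatticeWord]

section Tableau

variable {L : ℕ} {lam mu : Fin L → ℕ} {T : Fin L → ℕ → ℕ}

def rowWord (lam mu : Fin L → ℕ) (T : Fin L → ℕ → ℕ) (r : Fin L) : List ℕ :=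
  (List.range (lam r - mu r)).map fun i => T r (lam r - 1 - i)

theorem revWord_eq_flatMap :
    revWord L lam mu T = (List.finRange L).flatMap (rowWord lam mu T) :=
  rfl

theorem revWord_eq_append (r : Fin L) :
    revWord L lam mu T = ((List.finRange L).take r).flatMap (rowWord lam mu T) ++
      (rowWord lam mu T r ++ ((List.finRange L).drop (r + 1)).flatMap (rowWord lam mu T)) := by
  rw [revWord_eq_flatMap]
  conv_lhs => rw [← List.take_append_drop r (List.finRange L),
    List.drop_eq_getElem_cons (by simp)]
  simp

theorem lt_of_mem_take_finRange {r s : Fin L} (hs : s ∈ (List.finRange L).take r) : s < r := by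
  obtain ⟨i, hi, rfl⟩ := List.mem_take_iff_getElem.mp hs
  simp only [List.getElem_finRange, Fin.lt_def, Fin.val_cast]
  omega

theorem rowWord_eq_replicate {r : Fin L} {v : ℕ}
    (h : ∀ c, mu r ≤ c → c < lam r → T r c = v) :
    rowWord lam mu T r = List.replicate (lam r - mu r) v := by
  refine List.eq_replicate_iff.mpr ⟨by simp [rowWord], ?_⟩
  simp only [rowWord, List.mem_map, List.mem_range]
  rintro _ ⟨i, hi, rfl⟩
  exact h _ (by omega) (by omega)

theorem IsSSYT.succ_le (hT : IsSSYT L lam mu T) {r : Fin L} {c : ℕ}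
    (hcol : ∀ s ≤ r, mu s ≤ c ∧ c < lam s) : (r : ℕ) + 1 ≤ T r c := by
  obtain ⟨-, hpos, -, hstrict⟩ := hT
  induction r using WellFoundedLT.induction with
  | _ r ih =>
    by_cases h0 : (r : ℕ) = 0
    · have := hpos r c (hcol r le_rfl).1 (hcol r le_rfl).2
      omega
    · obtain ⟨s, hsr⟩ : ∃ s : Fin L, (s : ℕ) + 1 = r :=
        ⟨⟨r - 1, by omega⟩, by simp only; omega⟩
      have hs : s < r := Fin.lt_def.mpr (by omega)
      have := ih s hs fun t ht => hcol t (ht.trans hs.le)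
      have := hstrict s r hs c (hcol s hs.le).1 (hcol s hs.le).2 (hcol r le_rfl).1
        (hcol r le_rfl).2
      omega

/-- In the reading word the maximum can only grow by one at a time, and the rightmost entry
of a row is its largest, read before the rest of the row. -/
theorem IsLRTableau.le_succ (hT : IsLRTableau L lam mu T) (r : Fin L) (c : ℕ) :
    T r c ≤ r + 1 := by
  obtain ⟨⟨hz, -, hrow, -⟩, hlat⟩ := hT
  induction r using WellFoundedLT.induction generalizing c with
  | _ r ih =>
    by_cases hc : mu r ≤ c ∧ c < lam r
    · obtain ⟨tail, hhead⟩ : ∃ tail, rowWord lam mu T r = T r (lam r - 1) :: tail := by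
        rw [rowWord, show lam r - mu r = (lam r - mu r - 1) + 1 by omega,
          List.range_succ_eq_map, List.map_cons, Nat.sub_zero]
        exact ⟨_, rfl⟩
      rw [revWord_eq_append r, hhead, List.cons_append] at hlat
      refine (hrow r c _ hc.1 (by omega) (by omega)).trans (hlat.le_succ_of_forall_le ?_)
      simp only [List.mem_flatMap, rowWord, List.mem_map]
      rintro _ ⟨s, hs, i, -, rfl⟩
      have := ih s (lt_of_mem_take_finRange hs) (lam s - 1 - i)
      have := Fin.lt_def.mp (lt_of_mem_take_finRange hs)
      omega
    · rw [hz r c hc]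
      omega

theorem IsLRTableau.eq_succ (hT : IsLRTableau L lam mu T) {r : Fin L} {c : ℕ}
    (hcol : ∀ s ≤ r, mu s ≤ c ∧ c < lam s) : T r c = r + 1 :=
  le_antisymm (hT.le_succ r c) (hT.1.succ_le hcol)

end Tableau

section Shape

variable {m k j x : ℕ} {T : Fin (j + 1) → ℕ → ℕ}

/-- With `k = d - 2j - 1`, `outerShape m k j` and `innerShape k j` are the paper's
`λ = (m+d-2j, (d-2j+1)^j)` and `μ = ((d-2j-1)^j)`. -/
def outerShape (m k j : ℕ) : Fin (j + 1) → ℕ := fun r =>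
  if (r : ℕ) = 0 then m + k + 1 else k + 2

def innerShape (k j : ℕ) : Fin (j + 1) → ℕ := fun r => if (r : ℕ) < j then k else 0

def pairWord (j : ℕ) : List ℕ := (List.range j).flatMap fun s => [s + 2, s + 2]

theorem pairWord_succ (j : ℕ) : pairWord (j + 1) = pairWord j ++ [j + 2, j + 2] := by
  simp [pairWord, List.range_succ]

theorem count_pairWord (j a : ℕ) :
    (pairWord j).count a = if 2 ≤ a ∧ a ≤ j + 1 then 2 else 0 := by
  induction j with
  | zero => simp [pairWord]; omega
  | succ j ih =>
    rw [pairWord_succ, List.count_append, ih]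
    simp only [List.count_cons, List.count_nil, beq_iff_eq]
    split_ifs <;> omega

@[simp]
theorem innerShape_last : innerShape k j (Fin.last j) = 0 := by
  simp [innerShape]

theorem outerShape_last (hj : 1 ≤ j) : outerShape m k j (Fin.last j) = k + 2 := by
  simp [outerShape, show j ≠ 0 by omega]

theorem eq_last_of_innerShape_le {r : Fin (j + 1)} {c : ℕ} (hr : innerShape k j r ≤ c)
    (hc : c < k) : r = Fin.last j := by
  refine Fin.ext ?_
  simp only [innerShape] at hr
  split_ifs at hr
  · omega
  · simp only [Fin.val_last]
    omega

theorem column_full (hm : 1 ≤ m) {r : Fin (j + 1)} {c : ℕ} (hc : c < outerShape m k j r)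
    (hkc : k ≤ c) :
    ∀ s ≤ r, innerShape k j s ≤ c ∧ c < outerShape m k j s := by
  intro s hs
  rw [Fin.le_def] at hs
  simp only [innerShape, outerShape] at hc ⊢
  split_ifs at hc ⊢ <;> omega

theorem revWord_outerShape (hj : 1 ≤ j)
    (hT : ∀ r c, innerShape k j r ≤ c → c < outerShape m k j r → k ≤ c →
      T r c = r + 1) :
    revWord (j + 1) (outerShape m k j) (innerShape k j) T =
      List.replicate (m + 1) 1 ++ pairWord j ++
        (List.range k).map fun i => T (Fin.last j) (k - 1 - i) := by
  obtain ⟨J, rfl⟩ : ∃ J, j = J + 1 := ⟨j - 1, by omega⟩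
  have hrow (r : Fin (J + 2)) (hr : (r : ℕ) < J + 1) :
      rowWord (outerShape m k (J + 1)) (innerShape k (J + 1)) T r =
        List.replicate (outerShape m k (J + 1) r - innerShape k (J + 1) r) ((r : ℕ) + 1) :=
    rowWord_eq_replicate fun c h1 h2 => hT r c h1 h2 (by simpa [innerShape, hr] using h1)
  rw [revWord_eq_flatMap, List.finRange_succ_last, List.flatMap_append, List.finRange_succ,
    List.map_cons, List.flatMap_cons, List.map_map, List.flatMap_map]
  have hmid : (List.finRange J).flatMap (fun s => rowWord (outerShape m k (J + 1))
      (innerShape k (J + 1)) T ((Fin.castSucc ∘ Fin.succ) s)) = pairWord J := by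
    rw [pairWord, ← List.map_coe_finRange_eq_range, List.flatMap_map]
    refine List.flatMap_congr fun s _ => ?_
    rw [hrow _ (by simp)]
    simp [outerShape, innerShape]
  have hlast : rowWord (outerShape m k (J + 1)) (innerShape k (J + 1)) T (Fin.last (J + 1)) =
      [J + 2, J + 2] ++ (List.range k).map fun i => T (Fin.last (J + 1)) (k - 1 - i) := by
    have h1 := hT (Fin.last (J + 1)) (k + 1) (by simp) (by simp [outerShape_last]) (by omega)
    have h0 := hT (Fin.last (J + 1)) k (by simp) (by simp [outerShape_last]) le_rfl
    rw [rowWord, outerShape_last (by omega), innerShape_last, Nat.sub_zero,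
      List.range_succ_eq_map, List.range_succ_eq_map]
    simp only [List.map_cons, List.map_map, Function.comp_def]
    rw [show k + 2 - 1 - 0 = k + 1 by omega, show k + 2 - 1 - Nat.succ 0 = k by omega, h0, h1]
    exact congrArg _ (congrArg _ (List.map_congr_left fun i _ => by congr 1; omega))
  rw [hrow _ (by simp), hmid, List.flatMap_singleton, hlast, pairWord_succ]
  simp [outerShape, innerShape]
  omega

theorem isLatticeWord_replicate_append_pairWord (hm : 1 ≤ m) (j : ℕ) :
    IsLatticeWord (List.replicate (m + 1) 1 ++ pairWord j) := by
  induction j with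
  | zero => simpa [pairWord] using isLatticeWord_nil.append_replicate (n := m + 1) (a := 1)
  | succ j ih =>
    rw [pairWord_succ, ← List.append_assoc]
    refine ih.append_replicate (n := 2) (a := j + 2) fun _ => ?_
    simp only [List.count_append, List.count_replicate, count_pairWord, beq_iff_eq]
    split_ifs <;> omega

/-- Row `r < j` is constant `r + 1`; the last row reads `1 … 1 2 … 2 (j+1) (j+1)` with
`x - 1` twos. -/
def lrFilling (m k j x : ℕ) : Fin (j + 1) → ℕ → ℕ := fun r c =>
  if innerShape k j r ≤ c ∧ c < outerShape m k j r then
    if k ≤ c then r + 1 else if k + 1 - x ≤ c then 2 else 1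
  else 0

def lrWord (m k j x : ℕ) : List ℕ :=
  List.replicate (m + 1) 1 ++ pairWord j ++ List.replicate (x - 1) 2 ++
    List.replicate (k + 1 - x) 1

theorem revWord_lrFilling (hj : 1 ≤ j) (hx : 1 ≤ x) (hxk : x ≤ k + 1) :
    revWord (j + 1) (outerShape m k j) (innerShape k j) (lrFilling m k j x) =
      lrWord m k j x := by
  rw [revWord_outerShape hj fun r c hc₁ hc₂ hkc => by simp [lrFilling, hc₁, hc₂, hkc],
    lrWord, List.append_assoc _ (List.replicate _ 2)]
  congr 1
  refine List.ext_getElem (by simp; omega) fun i h₁ h₂ => ?_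
  simp only [List.length_map, List.length_range, List.length_append,
    List.length_replicate] at h₁ h₂
  simp [lrFilling, innerShape, outerShape, List.getElem_append, List.getElem_replicate]
  split_ifs <;> omega

theorem hasContent_lrFilling (hj : 1 ≤ j) (hx : 1 ≤ x) (hxk : x ≤ k + 1) :
    HasContent (j + 1) (outerShape m k j) (innerShape k j) (lrFilling m k j x)
      (uniformContent m (k + 2 * j + 1) j x) := by
  intro i hi
  rw [revWord_lrFilling hj hx hxk, lrWord]
  simp only [List.count_append, List.count_replicate, count_pairWord, uniformContent,
    beq_iff_eq]
  split_ifs <;> omega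

theorem isLatticeWord_lrWord_iff (hj : 1 ≤ j) (hx : 1 ≤ x) :
    IsLatticeWord (lrWord m k j x) ↔ x ≤ m := by
  constructor
  · intro h
    have := h.count_succ_le_of_append (i := 1) le_rfl
    simp only [List.count_append, List.count_replicate, count_pairWord, beq_iff_eq] at this
    split_ifs at this <;> omega
  · intro hxm
    refine ((isLatticeWord_replicate_append_pairWord (by omega) j).append_replicate
      fun _ => ?_).append_replicate fun h => absurd h (by omega)
    simp only [List.count_append, List.count_replicate, count_pairWord, beq_iff_eq]
    split_ifs <;> omega

theorem lrFilling_isSSYT (hj : 1 ≤ j) :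
    IsSSYT (j + 1) (outerShape m k j) (innerShape k j) (lrFilling m k j x) := by
  refine ⟨fun r c hc => if_neg hc, fun r c h₁ h₂ => ?_, fun r c₁ c₂ h₁ hle h₂ => ?_,
    fun r₁ r₂ hlt c h₁ h₂ h₃ h₄ => ?_⟩ <;>
  · simp only [lrFilling, innerShape, outerShape, Fin.lt_def] at *
    split_ifs at * <;> omega

theorem isLRTableau_lrFilling_iff (hj : 1 ≤ j) (hx : 1 ≤ x) (hxk : x ≤ k + 1) :
    IsLRTableau (j + 1) (outerShape m k j) (innerShape k j) (lrFilling m k j x) ↔ x ≤ m := by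
  rw [IsLRTableau, revWord_lrFilling hj hx hxk, isLatticeWord_lrWord_iff hj hx]
  exact and_iff_right (lrFilling_isSSYT hj)

theorem exists_threshold_of_monotoneOn {f : ℕ → ℕ} {N : ℕ} (hf : MonotoneOn f (Set.Iio N))
    (h12 : ∀ c < N, f c = 1 ∨ f c = 2) :
    ∃ s ≤ N, ∀ c < N, f c = if s ≤ c then 2 else 1 := by
  induction N with
  | zero => exact ⟨0, le_rfl, fun c hc => absurd hc (Nat.not_lt_zero c)⟩
  | succ N ih =>
    obtain ⟨s, hsN, hs⟩ :=
      ih (hf.mono (Set.Iio_subset_Iio N.le_succ)) fun c hc => h12 c (by omega)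
    rcases h12 N N.lt_succ_self with hN | hN
    · refine ⟨N + 1, le_rfl, fun c hc => ?_⟩
      have := hf (Set.mem_Iio.mpr hc) (Set.mem_Iio.mpr N.lt_succ_self) (by omega)
      rw [if_neg (by omega)]
      rcases h12 c hc with h | h <;> omega
    · refine ⟨s, by omega, fun c hc => ?_⟩
      rcases Nat.lt_succ_iff_lt_or_eq.mp hc with hc | rfl
      · exact hs c hc
      · rw [hN, if_pos hsN]

theorem IsLRTableau.eq_succ_of_le (hm : 1 ≤ m)
    (hT : IsLRTableau (j + 1) (outerShape m k j) (innerShape k j) T) {r : Fin (j + 1)} {c : ℕ}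
    (hc : c < outerShape m k j r) (hkc : k ≤ c) : T r c = r + 1 :=
  hT.eq_succ (column_full hm hc hkc)

theorem IsLRTableau.last_row_le_two (hm : 1 ≤ m) (hj : 1 ≤ j)
    (hT : IsLRTableau (j + 1) (outerShape m k j) (innerShape k j) T) {c : ℕ} (hc : c < k) :
    T (Fin.last j) c ≤ 2 := by
  have hword := revWord_outerShape hj fun r c _ hc₂ hkc => hT.eq_succ_of_le hm hc₂ hkc
  have houter := outerShape_last (m := m) (k := k) hj
  have hforced := hT.eq_succ_of_le hm (r := Fin.last j) (c := k) (by omega) le_rfl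
  obtain ⟨⟨-, -, hrow, -⟩, hlat⟩ := hT
  obtain ⟨k, rfl⟩ : ∃ k', k = k' + 1 := ⟨k - 1, by omega⟩
  refine (hrow (Fin.last j) c k (by simp) (by omega) (by omega)).trans ?_
  have hle := hrow (Fin.last j) k (k + 1) (by simp) (by omega) (by omega)
  simp only [Fin.val_last] at hforced
  -- `T (last j) k` is read right after `1^(m+1) 2 2 … (j+1) (j+1)`, where `2, …, j+1` occur
  -- equally often.
  rw [hword, List.range_succ_eq_map, List.map_cons, show k + 1 - 1 - 0 = k by omega] at hlat
  by_contra! h3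
  have := hlat.count_lt_count_pred (by omega)
  simp only [List.count_append, List.count_replicate, count_pairWord, beq_iff_eq] at this
  split_ifs at this <;> omega

theorem IsLRTableau.exists_eq_lrFilling (hm : 1 ≤ m) (hj : 1 ≤ j)
    (hT : IsLRTableau (j + 1) (outerShape m k j) (innerShape k j) T) :
    ∃ x, 1 ≤ x ∧ x ≤ k + 1 ∧ T = lrFilling m k j x := by
  have houter := outerShape_last (m := m) (k := k) hj
  obtain ⟨hzero, hpos, hrow, -⟩ := hT.1
  obtain ⟨s, hsk, hs⟩ := exists_threshold_of_monotoneOn (f := T (Fin.last j)) (N := k)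
    (fun a _ b hb hab => hrow _ a b (by simp) hab (by rw [Set.mem_Iio] at hb; omega))
    fun c hc => by
      have := hpos (Fin.last j) c (by simp) (by omega)
      have := hT.last_row_le_two hm hj hc
      omega
  refine ⟨k + 1 - s, by omega, by omega, ?_⟩
  funext r c
  unfold lrFilling
  split_ifs with hc hkc hsc
  · exact hT.eq_succ_of_le hm hc.2 hkc
  · rw [eq_last_of_innerShape_le hc.1 (by omega), hs c (by omega), if_pos (by omega)]
  · rw [eq_last_of_innerShape_le hc.1 (by omega), hs c (by omega), if_neg (by omega)]
  · exact hzero r c hc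

end Shape

theorem stmt9_general (m d j : ℕ) (hm : 1 ≤ m) (hj : 1 ≤ j) (hjd : 2*j ≤ d - 1)
    (lam : Fin (j+1) → ℕ) (mu : Fin (j+1) → ℕ)
    (hlam : lam = fun k : Fin (j+1) => if (k : ℕ) = 0 then m + d - 2*j else d - 2*j + 1)
    (hmu : mu = fun k : Fin (j+1) => if (k : ℕ) < j then d - 2*j - 1 else 0) :
    (∀ x, 1 ≤ x → x ≤ min m (d - 2*j) →
      ∃! T : Fin (j+1) → ℕ → ℕ,
        IsLRTableau (j+1) lam mu T ∧ HasContent (j+1) lam mu T (uniformContent m d j x))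
    ∧ (∀ T : Fin (j+1) → ℕ → ℕ, IsLRTableau (j+1) lam mu T →
        ∃ x, 1 ≤ x ∧ x ≤ min m (d - 2*j) ∧
          HasContent (j+1) lam mu T (uniformContent m d j x)) := by
  obtain ⟨k, rfl⟩ : ∃ k, d = k + 2 * j + 1 := ⟨d - 2 * j - 1, by omega⟩
  obtain rfl : lam = outerShape m k j := by
    rw [hlam]; funext r; simp only [outerShape]; split_ifs <;> omega
  obtain rfl : mu = innerShape k j := by
    rw [hmu]; funext r; simp only [innerShape]; split_ifs <;> omega
  rw [show k + 2 * j + 1 - 2 * j = k + 1 by omega]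
  refine ⟨fun x hx hxmk => ?_, fun T hT => ?_⟩
  · have hxk : x ≤ k + 1 := hxmk.trans (min_le_right _ _)
    refine ⟨lrFilling m k j x, ⟨(isLRTableau_lrFilling_iff hj hx hxk).mpr
      (hxmk.trans (min_le_left _ _)), hasContent_lrFilling hj hx hxk⟩, ?_⟩
    rintro T ⟨hT, hcont⟩
    obtain ⟨y, hy, hyk, rfl⟩ := hT.exists_eq_lrFilling hm hj
    have h2 := hcont 2 (by omega)
    rw [hasContent_lrFilling hj hy hyk 2 (by omega)] at h2
    simp only [uniformContent] at h2
    rw [show y = x by simpa using h2]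
  · obtain ⟨y, hy, hyk, rfl⟩ := hT.exists_eq_lrFilling hm hj
    exact ⟨y, hy, le_min ((isLRTableau_lrFilling_iff hj hy hyk).mp hT) hyk,
      hasContent_lrFilling hj hy hyk⟩

/-- For `m, d, j ≥ 1` with `2j ≤ d-1`, and the skew shape
`λ/μ = (m+d-2j, (d-2j+1)^j) / ((d-2j-1)^j)`:
(a) for each `1 ≤ x ≤ min(m, d-2j)` there is exactly one Littlewood-Richardson
tableau of shape `λ/μ` and content `(m+d-2j-x+1, x+1, 2^{j-1})`; and
(b) every Littlewood-Richardson tableau of shape `λ/μ` has content of this form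
for some such `x`. -/
theorem stmt9 (m d j : ℕ) (hm : 1 ≤ m) (hd : 1 ≤ d) (hj : 1 ≤ j) (hjd : 2*j ≤ d - 1)
    (lam : Fin (j+1) → ℕ) (mu : Fin (j+1) → ℕ)
    (hlam : lam = fun k : Fin (j+1) => if (k : ℕ) = 0 then m + d - 2*j else d - 2*j + 1)
    (hmu : mu = fun k : Fin (j+1) => if (k : ℕ) < j then d - 2*j - 1 else 0) :
    (∀ x, 1 ≤ x → x ≤ min m (d - 2*j) →
      ∃! T : Fin (j+1) → ℕ → ℕ,
        IsLRTableau (j+1) lam mu T ∧ HasContent (j+1) lam mu T (uniformContent m d j x))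
    ∧ (∀ T : Fin (j+1) → ℕ → ℕ, IsLRTableau (j+1) lam mu T →
        ∃ x, 1 ≤ x ∧ x ≤ min m (d - 2*j) ∧
          HasContent (j+1) lam mu T (uniformContent m d j x)) :=
  stmt9_general m d j hm hj hjd lam mu hlam hmu
end

section
/- For n ≥ 1, the identity \sum_{i=0}^{n-1} (-1)^i t^i e_i(x) h_{n-i}[(t-1)X] = (-1)^n (1 - t^n) e_n(x) holds. -/
noncomputable section

variable {A : Type*} [CommRing A] [Algebra ℚ A]

/-- Given the sequence `p k = p_k[E]` of plethystic values of the power sums at a formal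
series `E`, this is `h_n[E]`, the plethystic value of the complete homogeneous symmetric
function, determined by the Newton recursion `n·h_n = ∑_{k=1}^n p_k h_{n-k}`. -/
def plethH (p : ℕ → A) : ℕ → A
  | 0 => 1
  | n+1 => ((n : ℚ) + 1)⁻¹ • ∑ k ∈ Finset.range (n+1), p (k+1) * plethH p (n - k)
  decreasing_by exact Nat.lt_succ_of_le (Nat.sub_le _ _)

/-- Given the sequence `p k = p_k[E]`, this is `e_n[E]`, the plethystic value of the
elementary symmetric function, determined by `n·e_n = ∑_{k=1}^n (-1)^{k-1} p_k e_{n-k}`. -/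
def plethE (p : ℕ → A) : ℕ → A
  | 0 => 1
  | n+1 => ((n : ℚ) + 1)⁻¹ •
      ∑ k ∈ Finset.range (n+1), (-1 : A)^k * p (k+1) * plethE p (n - k)
  decreasing_by exact Nat.lt_succ_of_le (Nat.sub_le _ _)


/-- The ring of symmetric functions in `x = (x₁, x₂, …)` with coefficients in `ℚ[t]`:
the free polynomial ring on the power sums `p₁, p₂, …` (variable `k` is `p_{k+1}`). -/
abbrev SymT := MvPolynomial ℕ (Polynomial ℚ)

/-- The power sum `p_k(x) = p_k[X]` for `k ≥ 1`, where `X = x₁ + x₂ + ⋯`. -/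
def pX (k : ℕ) : SymT := MvPolynomial.X (k - 1)

/-- The parameter `t`, as a constant symmetric function. -/
def tt : SymT := MvPolynomial.C Polynomial.X

/-! ### Auxiliary lemmas -/

section Aux

open PowerSeries Finset

lemma plethH_zero_eq (p : ℕ → A) : plethH p 0 = 1 := by rw [plethH]

lemma plethH_succ_eq (p : ℕ → A) (n : ℕ) :
    plethH p (n+1) = ((n : ℚ) + 1)⁻¹ • ∑ k ∈ Finset.range (n+1), p (k+1) * plethH p (n - k) := by
  rw [plethH]

lemma plethE_zero_eq (p : ℕ → A) : plethE p 0 = 1 := by rw [plethE]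

lemma plethE_succ_eq (p : ℕ → A) (n : ℕ) :
    plethE p (n+1) = ((n : ℚ) + 1)⁻¹ •
      ∑ k ∈ Finset.range (n+1), (-1 : A)^k * p (k+1) * plethE p (n - k) := by
  rw [plethE]

lemma nsmul_cancel (n : ℕ) (x : A) : ((n : ℚ) + 1)⁻¹ • (x * ((n : A) + 1)) = x := by
  have h : ((n : A) + 1) = algebraMap ℚ A ((n : ℚ) + 1) := by
    simp
  rw [h, mul_comm, ← Algebra.smul_def, inv_smul_smul₀ (by positivity : ((n : ℚ) + 1) ≠ 0)]

lemma coeff_derivativeFun' (f : A⟦X⟧) (n : ℕ) :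
    coeff n f.derivativeFun = coeff (n + 1) f * (n + 1) := coeff_derivative f n

/-- The generating series `∑ p_k u^k` (with `p_0 := 0`). -/
def Ps (p : ℕ → A) : PowerSeries A := PowerSeries.mk fun k => if k = 0 then 0 else p k

/-- The generating series `H(u) = ∑ h_n u^n`. -/
def Hs (p : ℕ → A) : PowerSeries A := PowerSeries.mk (plethH p)

lemma Hs_ode (p : ℕ → A) : (X : A⟦X⟧) * (Hs p).derivativeFun = Ps p * Hs p := by
  ext n
  cases n with
  | zero =>
      simp [coeff_zero_eq_constantCoeff_apply, map_mul, Ps, Hs, coeff_mul]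
  | succ n =>
      rw [coeff_succ_X_mul, coeff_derivativeFun', coeff_mul,
        Finset.Nat.sum_antidiagonal_eq_sum_range_succ_mk, Finset.sum_range_succ']
      simp only [Ps, Hs, coeff_mk, Nat.succ_ne_zero, if_false, eq_self_iff_true, if_true,
        zero_mul, add_zero, Nat.succ_sub_succ, Nat.succ_eq_add_one]
      rw [plethH_succ_eq]
      rw [smul_mul_assoc]
      exact nsmul_cancel n _

lemma Hs_unique (p : ℕ → A) (F : A⟦X⟧) (h1 : constantCoeff F = 1)
    (hF : (X : A⟦X⟧) * F.derivativeFun = Ps p * F) : F = Hs p := by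
  ext n
  induction n using Nat.strong_induction_on with
  | _ n ih =>
    match n with
    | 0 =>
        rw [coeff_zero_eq_constantCoeff_apply, h1, Hs, coeff_zero_eq_constantCoeff_apply, constantCoeff_mk,
          plethH_zero_eq]
    | Nat.succ n =>
        have e1 := congrArg (PowerSeries.coeff (n+1)) hF
        rw [coeff_succ_X_mul, coeff_derivativeFun', coeff_mul,
          Finset.Nat.sum_antidiagonal_eq_sum_range_succ_mk, Finset.sum_range_succ'] at e1
        simp only [Ps, coeff_mk, Nat.succ_ne_zero, if_false, eq_self_iff_true, if_true,
          zero_mul, add_zero, Nat.succ_sub_succ, Nat.succ_eq_add_one] at e1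
        have e2 : PowerSeries.coeff (n+1) F
            = ((n : ℚ) + 1)⁻¹ • ∑ k ∈ Finset.range (n+1), p (k+1) * PowerSeries.coeff (n-k) F := by
          rw [← e1]
          push_cast
          rw [nsmul_cancel]
        rw [e2, Hs, coeff_mk, plethH_succ_eq]
        congr 1
        refine Finset.sum_congr rfl fun k hk => ?_
        rw [ih (n - k) (by omega), Hs, coeff_mk]

lemma Ps_add (a b : ℕ → A) : Ps (fun k => a k + b k) = Ps a + Ps b := by
  ext n
  simp only [Ps, coeff_mk, map_add]
  split_ifs <;> simp

lemma Hs_add (a b : ℕ → A) : Hs (fun k => a k + b k) = Hs a * Hs b := by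
  refine (Hs_unique _ _ ?_ ?_).symm
  · rw [map_mul]
    simp [Hs, plethH_zero_eq]
  · rw [derivativeFun_mul, smul_eq_mul, smul_eq_mul]
    have key : (X : A⟦X⟧) * (Hs a * (Hs b).derivativeFun + Hs b * (Hs a).derivativeFun)
        = Hs a * ((X : A⟦X⟧) * (Hs b).derivativeFun)
          + Hs b * ((X : A⟦X⟧) * (Hs a).derivativeFun) := by ring
    rw [key, Hs_ode a, Hs_ode b, Ps_add]
    ring

lemma Hs_zero : Hs (fun _ => (0 : A)) = 1 := by
  refine (Hs_unique _ 1 (map_one _) ?_).symm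
  rw [derivativeFun_one, mul_zero]
  have : Ps (fun _ => (0 : A)) = 0 := by
    ext n; simp [Ps]
  rw [this, zero_mul]

lemma plethH_scale (c : A) (p : ℕ → A) :
    ∀ n, plethH (fun k => c^k * p k) n = c^n * plethH p n := by
  intro n
  induction n using Nat.strong_induction_on with
  | _ n ih =>
    match n with
    | 0 => rw [plethH_zero_eq, plethH_zero_eq, pow_zero, mul_one]
    | Nat.succ n =>
        simp only [Nat.succ_eq_add_one]
        rw [plethH_succ_eq, plethH_succ_eq, mul_smul_comm, Finset.mul_sum]
        congr 1
        refine Finset.sum_congr rfl fun k hk => ?_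
        have hk' : k < n + 1 := Finset.mem_range.mp hk
        rw [ih (n - k) (by omega),
          show n + 1 = (k + 1) + (n - k) by omega, pow_add]
        ring

lemma plethH_neg (p : ℕ → A) :
    ∀ n, plethH (fun k => - p k) n = (-1)^n * plethE p n := by
  intro n
  induction n using Nat.strong_induction_on with
  | _ n ih =>
    match n with
    | 0 => rw [plethH_zero_eq, plethE_zero_eq, pow_zero, mul_one]
    | Nat.succ n =>
        simp only [Nat.succ_eq_add_one]
        rw [plethH_succ_eq, plethE_succ_eq, mul_smul_comm, Finset.mul_sum]
        congr 1
        refine Finset.sum_congr rfl fun k hk => ?_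
        have hk' : k < n + 1 := Finset.mem_range.mp hk
        rw [ih (n - k) (by omega)]
        have h2 : ((-1 : A))^(n+1) * (-1)^k = -(-1)^(n-k) := by
          rw [← pow_add, show n + 1 + k = 2*k + ((n - k) + 1) by omega, pow_add, pow_mul]
          simp [pow_succ]
        linear_combination (-(p (k+1) * plethE p (n-k))) * h2

end Aux

/-- For `n ≥ 1`, `∑_{i=0}^{n-1} (-1)^i tⁱ e_i(x) · h_{n-i}[(t-1)X] = (-1)^n (1 - tⁿ) e_n(x)`,
where `h_m[(t-1)X]` is determined plethystically by `p_k[(t-1)X] = (t^k - 1) p_k(x)`. -/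
theorem stmt17 (n : ℕ) (hn : 1 ≤ n) :
    ∑ i ∈ Finset.range n, (-1 : SymT)^i * tt^i * plethE pX i *
        plethH (fun k => (tt^k - 1) * pX k) (n - i)
    = (-1 : SymT)^n * (1 - tt^n) * plethE pX n := by
  have key : ∀ m : ℕ,
      ∑ i ∈ Finset.range (m+1), (-1 : SymT)^i * tt^i * plethE pX i *
          plethH (fun k => (tt^k - 1) * pX k) (m - i)
        = (-1 : SymT)^m * plethE pX m := by
    intro m
    have h1 : Hs (fun k => tt^k * (- pX k)) * Hs (fun k => (tt^k - 1) * pX k)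
        = Hs (fun k => - pX k) := by
      have hq : (fun k => (tt^k - 1) * pX k) = (fun k => tt^k * pX k + (- pX k)) := by
        funext k; ring
      rw [hq, Hs_add (fun k => tt^k * pX k) (fun k => - pX k), ← mul_assoc,
        ← Hs_add (fun k => tt^k * (- pX k)) (fun k => tt^k * pX k)]
      have h0 : (fun k => tt^k * (- pX k) + tt^k * pX k) = (fun _ => (0 : SymT)) := by
        funext k; ring
      rw [h0, Hs_zero, one_mul]
    have h2 := congrArg (PowerSeries.coeff m) h1
    rw [PowerSeries.coeff_mul, Finset.Nat.sum_antidiagonal_eq_sum_range_succ_mk] at h2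
    simp only [Hs, PowerSeries.coeff_mk] at h2
    calc ∑ i ∈ Finset.range (m+1), (-1 : SymT)^i * tt^i * plethE pX i *
          plethH (fun k => (tt^k - 1) * pX k) (m - i)
        = ∑ i ∈ Finset.range (m+1), plethH (fun k => tt^k * (- pX k)) i *
            plethH (fun k => (tt^k - 1) * pX k) (m - i) := by
          refine Finset.sum_congr rfl fun i hi => ?_
          rw [plethH_scale tt (fun k => - pX k) i, plethH_neg pX i]
          ring
      _ = plethH (fun k => - pX k) m := h2
      _ = (-1 : SymT)^m * plethE pX m := plethH_neg pX m
  have k := key n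
  rw [Finset.sum_range_succ, Nat.sub_self, plethH_zero_eq, mul_one] at k
  linear_combination k
end
end
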